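/- For each integer n ≥ 1, let G* be the graph on 5n vertices {u_i, v_i, x_i, y_i, z_i : 1 ≤ i ≤ n} whose edges are, for each i, the edges u_i v_i, u_i x_i, u_i y_i, v_i x_i, v_i y_i, x_i z_i, y_i z_i (a copy of K₄ on u_i, v_i, x_i, y_i with the edge x_i y_i subdivided by z_i), together with the edges z_i u_{i+1} for 1 ≤ i ≤ n − 1. Then χ_DP(G*) = 3 and α₂^{DP}(G*) = 3n; in particular, α₂^{DP}(G*) = 3n < 2·|V(G*)|/χ_DP(G*) = 10n/3, so G* is not partially DP-nice. -/

import Mathlib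

open SimpleGraph

/-- `DPCover G H L` means `(L, H)` is a cover of the graph `G`:
(1) the sets `L u` partition `V(H)`; (2) each `H[L u]` is complete;
(3) for each edge `uv` of `G`, the edges of `H` between `L u` and `L v` form a matching;
(4) there are no edges of `H` between lists of distinct non-adjacent vertices. -/
structure DPCover {V : Type} (G : SimpleGraph V) {W : Type} (H : SimpleGraph W)
    (L : V → Finset W) : Prop where
  partition : ∀ w : W, ∃! v : V, w ∈ L v
  cliques : ∀ v : V, ∀ a ∈ L v, ∀ b ∈ L v, a ≠ b → H.Adj a b
  matching : ∀ ⦃u v : V⦄, G.Adj u v → ∀ a ∈ L u, ∀ b ∈ L v, ∀ b' ∈ L v,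
      H.Adj a b → H.Adj a b' → b = b'
  nonadj : ∀ ⦃u v : V⦄, u ≠ v → ¬ G.Adj u v → ∀ a ∈ L u, ∀ b ∈ L v, ¬ H.Adj a b

/-- A finset is independent in `H` if no two of its elements are adjacent. -/
def IsIndepFinset {W : Type} (H : SimpleGraph W) (S : Finset W) : Prop :=
  ∀ a ∈ S, ∀ b ∈ S, ¬ H.Adj a b

/-- The independence number of `H`. -/
noncomputable def indepNum {W : Type} [Fintype W] (H : SimpleGraph W) : ℕ :=
  sSup {n : ℕ | ∃ S : Finset W, IsIndepFinset H S ∧ S.card = n}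

/-- The DP-chromatic number of `G`: the least `m` such that every `m`-fold cover `(L, H)`
of `G` admits an `H`-coloring, i.e. an independent set in `H` of size `|V(G)|`. -/
noncomputable def chiDP {V : Type} [Fintype V] (G : SimpleGraph V) : ℕ :=
  sInf {m : ℕ | ∀ (W : Type) (_ : Fintype W) (H : SimpleGraph W) (L : V → Finset W),
    DPCover G H L → (∀ v, (L v).card = m) →
    ∃ S : Finset W, IsIndepFinset H S ∧ S.card = Fintype.card V}

/-- The partial DP `t`-chromatic number of `G`: the minimum of the independence number
`α(H)` over all `t`-fold covers `(L, H)` of `G`. -/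
noncomputable def alphaDP {V : Type} [Fintype V] (G : SimpleGraph V) (t : ℕ) : ℕ :=
  sInf {n : ℕ | ∃ (W : Type) (_ : Fintype W) (H : SimpleGraph W) (L : V → Finset W),
    DPCover G H L ∧ (∀ v, (L v).card = t) ∧ _root_.indepNum H = n}

/-- A graph `G` is partially DP-nice if `α_t^{DP}(G) ≥ t|V(G)|/χ_DP(G)` for all
`t ∈ {1, …, χ_DP(G)}`. -/
def PartiallyDPNice {V : Type} [Fintype V] (G : SimpleGraph V) : Prop :=
  ∀ t : ℕ, 1 ≤ t → t ≤ chiDP G →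
    (t * Fintype.card V : ℚ) / (chiDP G : ℚ) ≤ (alphaDP G t : ℚ)

/-- The edges of the gadget graph on five vertices `0 = u, 1 = v, 2 = x, 3 = y, 4 = z`:
a copy of `K₄` on `u, v, x, y` with the edge `xy` subdivided by `z`, i.e. the edges
`uv, ux, uy, vx, vy, xz, yz`. -/
def gadgetEdges : Finset (Sym2 (Fin 5)) :=
  {s(0, 1), s(0, 2), s(0, 3), s(1, 2), s(1, 3), s(2, 4), s(3, 4)}

/-- The graph `G*` on `5n` vertices: `n` disjoint copies of the gadget (copy `i` on the
vertices `(i, 0), …, (i, 4)`), together with the linking edges `z_i u_{i+1}`. -/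
def chainGadgetGraph (n : ℕ) : SimpleGraph (Fin n × Fin 5) where
  Adj p q := (p.1 = q.1 ∧ s(p.2, q.2) ∈ gadgetEdges) ∨
    ((q.1 : ℕ) = (p.1 : ℕ) + 1 ∧ p.2 = 4 ∧ q.2 = 0) ∨
    ((p.1 : ℕ) = (q.1 : ℕ) + 1 ∧ p.2 = 0 ∧ q.2 = 4)
  symm := by
    refine ⟨?_⟩
    rintro p q (⟨h1, h2⟩ | ⟨h1, h2, h3⟩ | ⟨h1, h2, h3⟩)
    · exact Or.inl ⟨h1.symm, by rwa [Sym2.eq_swap]⟩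
    · exact Or.inr (Or.inr ⟨h1, h3, h2⟩)
    · exact Or.inr (Or.inl ⟨h1, h3, h2⟩)
  loopless := by
    have hgadget : ∀ a : Fin 5, s(a, a) ∉ gadgetEdges := by decide
    refine ⟨?_⟩
    rintro p (⟨_, h2⟩ | ⟨h1, _, _⟩ | ⟨h1, _, _⟩)
    · exact hgadget p.2 h2
    · omega
    · omega

/-!
Upper bound `χ_DP ≤ 3`: in the order `u₁, v₁, x₁, y₁, z₁, u₂, …` every vertex has at most two
earlier neighbours, and since the edges of a cover between two lists form a matching, each earlier
neighbour forbids at most one vertex of the next list, so greedy colouring succeeds from lists of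
size 3. Lower bound: the trivial cover turns an `H`-colouring into a proper colouring, and
`u₁ v₁ x₁` is a triangle.

In any 2-fold cover pick a vertex of `L(vᵢ)`, then vertices of `L(xᵢ)` and `L(yᵢ)` not adjacent
to it; as `xᵢ yᵢ` is not an edge and `vᵢ, xᵢ, yᵢ` have no neighbours outside gadget `i`, this gives
`3n` independent vertices. Conversely, in the 2-fold cover that is straight on every edge except
the `yᵢ zᵢ`, where it is crossed, each gadget has independence number 3 (a finite check), so
`α₂^DP = 3n < 10n/3`.
-/

open Finset

section IndepNum

variable {W : Type} {H : SimpleGraph W}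

theorem IsIndepFinset.card_le_indepNum [Fintype W] {S : Finset W} (hS : IsIndepFinset H S) :
    #S ≤ _root_.indepNum H :=
  le_csSup ⟨Fintype.card W, fun _ ⟨T, _, hT⟩ => hT ▸ card_le_univ T⟩ ⟨S, hS, rfl⟩

theorem indepNum_le_of_forall [Fintype W] {k : ℕ} (h : ∀ S, IsIndepFinset H S → #S ≤ k) :
    _root_.indepNum H ≤ k :=
  csSup_le ⟨0, ∅, fun _ ha => absurd ha (notMem_empty _), rfl⟩ fun _ ⟨S, hS, hSk⟩ => hSk ▸ h S hS

end IndepNum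

/-- `f` is an `H`-colouring of `G[s]`. -/
def IsHColoringOn {V W : Type} (G : SimpleGraph V) (H : SimpleGraph W) (L : V → Finset W)
    (s : Finset V) (f : V → W) : Prop :=
  (∀ v ∈ s, f v ∈ L v) ∧ ∀ u ∈ s, ∀ v ∈ s, G.Adj u v → ¬ H.Adj (f u) (f v)

namespace DPCover

variable {V W : Type} {G : SimpleGraph V} {H : SimpleGraph W} {L : V → Finset W}

theorem eq_of_mem (hc : DPCover G H L) {u v : V} {w : W} (hu : w ∈ L u) (hv : w ∈ L v) :
    u = v :=
  (hc.partition w).unique hu hv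

theorem exists_mem_forall_not_adj (hc : DPCover G H L) {v : V} {N : Finset V} {f : V → W}
    (hN : ∀ u ∈ N, G.Adj u v) (hf : ∀ u ∈ N, f u ∈ L u) (hcard : #N < #(L v)) :
    ∃ w ∈ L v, ∀ u ∈ N, ¬ H.Adj (f u) w := by
  classical
  have hblock : ∀ u ∈ N, #((L v).filter (H.Adj (f u))) ≤ 1 := fun u hu =>
    card_le_one.2 fun b hb b' hb' =>
      hc.matching (hN u hu) _ (hf u hu) _ (mem_filter.1 hb).1 _ (mem_filter.1 hb').1
        (mem_filter.1 hb).2 (mem_filter.1 hb').2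
  have hblocked : #(N.biUnion fun u => (L v).filter (H.Adj (f u))) < #(L v) :=
    calc _ ≤ ∑ u ∈ N, #((L v).filter (H.Adj (f u))) := card_biUnion_le
      _ ≤ ∑ _u ∈ N, 1 := sum_le_sum hblock
      _ < #(L v) := by simpa using hcard
  obtain ⟨w, hw, hfree⟩ := exists_mem_notMem_of_card_lt_card hblocked
  exact ⟨w, hw, fun u hu hadj => hfree (mem_biUnion.2 ⟨u, hu, mem_filter.2 ⟨hw, hadj⟩⟩)⟩

theorem exists_mem_not_adj (hc : DPCover G H L) {u v : V} (huv : G.Adj u v) {a : W}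
    (ha : a ∈ L u) (hv : 1 < #(L v)) : ∃ b ∈ L v, ¬ H.Adj a b := by
  obtain ⟨b, hb, hfree⟩ := hc.exists_mem_forall_not_adj (N := {u}) (f := fun _ => a)
    (by simpa using huv) (by simpa using ha) (by simpa using hv)
  exact ⟨b, hb, hfree u (mem_singleton_self u)⟩

theorem exists_isIndepFinset_card_eq (hc : DPCover G H L) {T : Finset V} {f : V → W}
    (hf : IsHColoringOn G H L T f) : ∃ S, IsIndepFinset H S ∧ #S = #T := by
  classical
  obtain ⟨hmem, hproper⟩ := hf
  refine ⟨T.image f, ?_, card_image_of_injOn fun u hu v hv huv =>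
    hc.eq_of_mem (hmem u hu) (by rw [huv]; exact hmem v hv)⟩
  simp only [IsIndepFinset, mem_image]
  rintro _ ⟨u, hu, rfl⟩ _ ⟨v, hv, rfl⟩
  by_cases huv : u = v
  · subst huv
    exact H.irrefl
  by_cases hadj : G.Adj u v
  · exact hproper u hu v hv hadj
  · exact hc.nonadj huv hadj _ (hmem u hu) _ (hmem v hv)

theorem exists_isHColoringOn_insert [DecidableEq V] [DecidableRel G.Adj] (hc : DPCover G H L)
    {s : Finset V} {v : V} (hvs : v ∉ s) {f : V → W} (hf : IsHColoringOn G H L s f)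
    (hcard : #(s.filter (G.Adj · v)) < #(L v)) :
    ∃ w, IsHColoringOn G H L (insert v s) (Function.update f v w) := by
  obtain ⟨hmem, hproper⟩ := hf
  obtain ⟨w, hw, hfree⟩ := hc.exists_mem_forall_not_adj (f := f)
    (fun u hu => (mem_filter.1 hu).2) (fun u hu => hmem u (mem_filter.1 hu).1) hcard
  have hfree' : ∀ u ∈ s, G.Adj u v → ¬ H.Adj (f u) w := fun u hu huv =>
    hfree u (mem_filter.2 ⟨hu, huv⟩)
  have hupdate : ∀ u ∈ s, Function.update f v w u = f u := fun u hu =>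
    Function.update_of_ne (ne_of_mem_of_not_mem hu hvs) _ _
  refine ⟨w, ⟨fun x hx => ?_, fun x hx y hy hxy => ?_⟩⟩ <;> rw [mem_insert] at hx
  · rcases hx with rfl | hx
    · simpa using hw
    · simpa [hupdate x hx] using hmem x hx
  rw [mem_insert] at hy
  rcases hx with rfl | hx <;> rcases hy with rfl | hy
  · exact absurd hxy G.irrefl
  · rw [Function.update_self, hupdate y hy]
    exact fun h => hfree' y hy hxy.symm h.symm
  · rw [Function.update_self, hupdate x hx]
    exact hfree' x hx hxy
  · rw [hupdate x hx, hupdate y hy]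
    exact hproper x hx y hy hxy

theorem exists_coloring_of_degenerate [Fintype V] (hc : DPCover G H L) {k : ℕ}
    (hL : ∀ v, k < #(L v)) (idx : V → ℕ) (hidx : Function.Injective idx)
    (hdeg : ∀ v, ∃ N : Finset V, #N ≤ k ∧ ∀ u, G.Adj u v → idx u < idx v → u ∈ N) :
    ∃ S, IsIndepFinset H S ∧ #S = Fintype.card V := by
  classical
  suffices ∃ f, IsHColoringOn G H L univ f from
    let ⟨_, hf⟩ := this; hc.exists_isIndepFinset_card_eq hf
  induction (univ : Finset V) using induction_on_max_value idx with
  | empty =>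
    have hne : ∀ v, (L v).Nonempty := fun v => card_pos.1 (Nat.zero_lt_of_lt (hL v))
    exact ⟨fun v => (hne v).choose, by simp [IsHColoringOn]⟩
  | insert v s hvs hmax ih =>
    obtain ⟨f, hf⟩ := ih
    obtain ⟨N, hN, hNv⟩ := hdeg v
    have hsub : s.filter (G.Adj · v) ⊆ N := fun u hu => by
      obtain ⟨hus, huv⟩ := mem_filter.1 hu
      exact hNv u huv (lt_of_le_of_ne (hmax u hus) fun h => hvs (hidx h ▸ hus))
    obtain ⟨w, hw⟩ := hc.exists_isHColoringOn_insert hvs hf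
      (((card_le_card hsub).trans hN).trans_lt (hL v))
    exact ⟨_, hw⟩

end DPCover

section PermCover

variable {V α : Type}

/-- The cover of `G` on `V × α` in which the edge `uv` carries the matching `c ↦ π u v c`. -/
def permCover (G : SimpleGraph V) (π : V → V → Equiv.Perm α)
    (hπ : ∀ u v, π v u = (π u v).symm) : SimpleGraph (V × α) where
  Adj p q := (p.1 = q.1 ∧ p.2 ≠ q.2) ∨ (G.Adj p.1 q.1 ∧ q.2 = π p.1 q.1 p.2)
  symm := by
    refine ⟨?_⟩
    rintro p q (⟨h1, h2⟩ | ⟨h1, h2⟩)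
    · exact Or.inl ⟨h1.symm, h2.symm⟩
    · exact Or.inr ⟨h1.symm, by rw [hπ, h2, Equiv.symm_apply_apply]⟩
  loopless := ⟨fun _ h => h.elim (fun h => h.2 rfl) (fun h => G.irrefl h.1)⟩

variable {G : SimpleGraph V} {π : V → V → Equiv.Perm α} {hπ : ∀ u v, π v u = (π u v).symm}

@[simp]
theorem permCover_adj {p q : V × α} :
    (permCover G π hπ).Adj p q ↔ (p.1 = q.1 ∧ p.2 ≠ q.2) ∨ (G.Adj p.1 q.1 ∧ q.2 = π p.1 q.1 p.2) :=
  Iff.rfl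

instance [DecidableEq V] [DecidableEq α] [DecidableRel G.Adj] :
    DecidableRel (permCover G π hπ).Adj :=
  fun _ _ => decidable_of_iff' _ permCover_adj

theorem dpCover_permCover [Fintype α] :
    DPCover G (permCover G π hπ) (fun v => {v} ×ˢ univ) where
  partition w := by
    simp only [mem_product, mem_singleton, mem_univ, and_true]
    exact ⟨w.1, rfl, fun v hv => hv.symm⟩
  cliques v a ha b hb hab := by
    simp only [mem_product, mem_singleton, mem_univ, and_true] at ha hb
    exact Or.inl ⟨ha.trans hb.symm, fun h => hab (Prod.ext (ha.trans hb.symm) h)⟩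
  matching u v huv a ha b hb b' hb' h h' := by
    simp only [mem_product, mem_singleton, mem_univ, and_true] at ha hb hb'
    subst ha hb
    rcases h with ⟨h, -⟩ | ⟨-, h⟩
    · exact absurd h huv.ne
    rcases h' with ⟨h', -⟩ | ⟨-, h'⟩
    · exact absurd (h'.trans hb') huv.ne
    exact Prod.ext hb'.symm (h.trans (hb' ▸ h'.symm))
  nonadj u v huv hnadj a ha b hb h := by
    simp only [mem_product, mem_singleton, mem_univ, and_true] at ha hb
    subst ha hb
    exact h.elim (fun h => huv h.1) (fun h => hnadj h.1)

theorem colorable_of_forall_exists_coloring [Fintype V] {m : ℕ}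
    (h : ∀ (W : Type) (_ : Fintype W) (H : SimpleGraph W) (L : V → Finset W), DPCover G H L →
      (∀ v, #(L v) = m) → ∃ S, IsIndepFinset H S ∧ #S = Fintype.card V) :
    G.Colorable m := by
  classical
  obtain ⟨S, hS, hcard⟩ := h _ inferInstance
    (permCover G (fun _ _ => (1 : Equiv.Perm (Fin m))) fun _ _ => rfl) _ dpCover_permCover
    (fun v => by simp)
  have hinj : Set.InjOn Prod.fst (S : Set (V × Fin m)) := fun p hp q hq hpq =>
    by_contra fun hne => hS p hp q hq (Or.inl ⟨hpq, fun h => hne (Prod.ext hpq h)⟩)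
  have himage : S.image Prod.fst = univ :=
    eq_univ_of_card _ (by rw [card_image_of_injOn hinj, hcard])
  have hcol : ∀ v, ∃ c, (v, c) ∈ S := fun v => by
    obtain ⟨p, hp, rfl⟩ := mem_image.1 (himage ▸ mem_univ v)
    exact ⟨p.2, hp⟩
  choose col hcol using hcol
  simpa using (Coloring.mk col fun {u v} huv h =>
    hS _ (hcol u) _ (hcol v) (Or.inr ⟨huv, by simp [h]⟩)).colorable

end PermCover

def gadgetGraph : SimpleGraph (Fin 5) where
  Adj j j' := s(j, j') ∈ gadgetEdges
  symm := ⟨fun _ _ h => by rwa [Sym2.eq_swap]⟩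
  loopless := ⟨by decide⟩

instance : DecidableRel gadgetGraph.Adj :=
  fun j j' => inferInstanceAs (Decidable (s(j, j') ∈ gadgetEdges))

section ChainGadgetGraph

variable {n : ℕ}

theorem chainGadgetGraph_adj_mk_mk {i : Fin n} {j j' : Fin 5} :
    (chainGadgetGraph n).Adj (i, j) (i, j') ↔ gadgetGraph.Adj j j' := by
  refine ⟨?_, fun h => Or.inl ⟨rfl, h⟩⟩
  rintro (⟨-, h⟩ | ⟨h, -⟩ | ⟨h, -⟩)
  · exact h
  all_goals dsimp only at h; omega

theorem eq_of_chainGadgetGraph_adj {i i' : Fin n} {j j' : Fin 5}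
    (h : (chainGadgetGraph n).Adj (i, j) (i', j')) (hj₀ : j ≠ 0) (hj₄ : j ≠ 4) : i = i' := by
  rcases h with ⟨h, -⟩ | ⟨-, h, -⟩ | ⟨-, h, -⟩
  exacts [h, absurd h hj₄, absurd h hj₀]

theorem three_le_of_chainGadgetGraph_colorable (hn : 1 ≤ n) {m : ℕ}
    (h : (chainGadgetGraph n).Colorable m) : 3 ≤ m := by
  classical
  let i : Fin n := ⟨0, hn⟩
  have hclique : (chainGadgetGraph n).IsNClique 3 {(i, 0), (i, 1), (i, 2)} :=
    is3Clique_triple_iff.2 (by simp only [chainGadgetGraph_adj_mk_mk]; decide)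
  exact hclique.card_eq ▸ hclique.isClique.card_le_of_colorable h

def chainIndex (p : Fin n × Fin 5) : ℕ := 5 * p.1 + p.2

theorem chainIndex_injective : Function.Injective (chainIndex (n := n)) := by
  rintro ⟨i, j⟩ ⟨i', j'⟩ h
  simp only [chainIndex] at h
  ext <;> simp only <;> omega

theorem chainGadgetGraph_degenerate (v : Fin n × Fin 5) :
    ∃ N : Finset (Fin n × Fin 5), #N ≤ 2 ∧
      ∀ u, (chainGadgetGraph n).Adj u v → chainIndex u < chainIndex v → u ∈ N := by
  classical
  obtain ⟨i, j⟩ := v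
  let before : Finset (Fin 5) := univ.filter fun j' => gadgetGraph.Adj j' j ∧ j' < j
  refine ⟨if j = 0 then {(⟨i - 1, by omega⟩, 4)} else before.image (i, ·), ?_, ?_⟩
  · split_ifs
    · simp
    · exact card_image_le.trans (by revert j; decide)
  rintro ⟨i', j'⟩ hadj hlt
  rcases hadj with ⟨rfl, hadj⟩ | ⟨hi, rfl, rfl⟩ | ⟨hi, rfl, rfl⟩ <;> dsimp only [chainIndex] at hlt
  · have hj : j' < j := by simp only [Fin.lt_def]; omega
    rw [if_neg (Fin.ne_zero_of_lt hj)]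
    exact mem_image.2 ⟨j', mem_filter.2 ⟨mem_univ _, hadj, hj⟩, rfl⟩
  · rw [if_pos rfl, mem_singleton]
    ext
    · dsimp only at hi ⊢
      omega
    · rfl
  · dsimp only at hi
    simp only [Fin.isValue, Fin.coe_ofNat_eq_mod, Nat.zero_mod, add_zero, Nat.mod_succ] at hlt
    omega

theorem chiDP_chainGadgetGraph (hn : 1 ≤ n) : chiDP (chainGadgetGraph n) = 3 :=
  IsLeast.csInf_eq ⟨fun _ _ _ _ hc hL => hc.exists_coloring_of_degenerate (k := 2)
    (fun v => by rw [hL]; omega) chainIndex chainIndex_injective chainGadgetGraph_degenerate,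
    fun _ hm => three_le_of_chainGadgetGraph_colorable hn (colorable_of_forall_exists_coloring hm)⟩

end ChainGadgetGraph

section AlphaDP

variable {n : ℕ}

theorem exists_isIndepFinset_card_eq_three_mul {W : Type} {H : SimpleGraph W}
    {L : Fin n × Fin 5 → Finset W} (hc : DPCover (chainGadgetGraph n) H L)
    (hL : ∀ v, #(L v) = 2) : ∃ S, IsIndepFinset H S ∧ #S = 3 * n := by
  classical
  -- colour `v_i` first, then `x_i` and `y_i` away from it
  have hgadget : ∀ i : Fin n, ∃ b ∈ L (i, 1), ∃ a ∈ L (i, 2), ∃ c ∈ L (i, 3),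
      ¬ H.Adj b a ∧ ¬ H.Adj b c := by
    intro i
    obtain ⟨b, hb⟩ := card_pos.1 (by rw [hL]; omega : 0 < #(L (i, 1)))
    obtain ⟨a, ha, hba⟩ := hc.exists_mem_not_adj
      ((chainGadgetGraph_adj_mk_mk (j := 1) (j' := 2)).2 (by decide)) hb (by rw [hL]; omega)
    obtain ⟨c, hc, hbc⟩ := hc.exists_mem_not_adj
      ((chainGadgetGraph_adj_mk_mk (j := 1) (j' := 3)).2 (by decide)) hb (by rw [hL]; omega)
    exact ⟨b, hb, a, ha, c, hc, hba, hbc⟩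
  choose b hb a ha c hc' hba hbc using hgadget
  let T : Finset (Fin n × Fin 5) := univ ×ˢ {1, 2, 3}
  let f : Fin n × Fin 5 → W := fun p =>
    if p.2 = 2 then a p.1 else if p.2 = 3 then c p.1 else b p.1
  have hf : IsHColoringOn (chainGadgetGraph n) H L T f := by
    refine ⟨?_, ?_⟩
    · rintro ⟨i, j⟩ hp
      simp only [T, mem_product, mem_univ, mem_insert, mem_singleton, true_and] at hp
      rcases hp with rfl | rfl | rfl
      exacts [hb i, ha i, hc' i]
    rintro ⟨i, j⟩ hp ⟨i', j'⟩ hp' hadj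
    simp only [T, mem_product, mem_univ, mem_insert, mem_singleton, true_and] at hp hp'
    -- `v_i`, `x_i`, `y_i` have no neighbours outside their gadget
    obtain rfl := eq_of_chainGadgetGraph_adj hadj (by rcases hp with rfl | rfl | rfl <;> decide)
      (by rcases hp with rfl | rfl | rfl <;> decide)
    rw [chainGadgetGraph_adj_mk_mk] at hadj
    rcases hp with rfl | rfl | rfl <;> rcases hp' with rfl | rfl | rfl
    all_goals first
      | exact absurd hadj (by decide)
      | exact hba i | exact hbc i | exact fun h => hba i h.symm | exact fun h => hbc i h.symm
  obtain ⟨S, hS, hcard⟩ := hc.exists_isIndepFinset_card_eq hf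
  exact ⟨S, hS, by simpa [T, mul_comm] using hcard⟩

def gadgetTwist (j j' : Fin 5) : Equiv.Perm (Fin 2) :=
  if s(j, j') = s(3, 4) then Equiv.swap 0 1 else 1

theorem gadgetTwist_symm : ∀ j j', gadgetTwist j' j = (gadgetTwist j j').symm := by decide

def chainTwist (p q : Fin n × Fin 5) : Equiv.Perm (Fin 2) :=
  if p.1 = q.1 then gadgetTwist p.2 q.2 else 1

theorem chainTwist_symm (p q : Fin n × Fin 5) : chainTwist q p = (chainTwist p q).symm := by
  simp only [chainTwist, eq_comm (a := q.1)]
  split_ifs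
  exacts [gadgetTwist_symm _ _, rfl]

abbrev gadgetCover : SimpleGraph (Fin 5 × Fin 2) :=
  permCover gadgetGraph gadgetTwist gadgetTwist_symm

abbrev chainCover (n : ℕ) : SimpleGraph ((Fin n × Fin 5) × Fin 2) :=
  permCover (chainGadgetGraph n) chainTwist chainTwist_symm

theorem chainCover_adj_mk_mk {i : Fin n} {j j' : Fin 5} {c c' : Fin 2} :
    (chainCover n).Adj ((i, j), c) ((i, j'), c') ↔ gadgetCover.Adj (j, c) (j', c') := by
  simp [chainTwist, chainGadgetGraph_adj_mk_mk]

set_option maxRecDepth 10000 in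
set_option synthInstance.maxSize 1000 in
theorem gadgetCover_adj_of_four : ∀ a b c d : Fin 5 × Fin 2,
    a ≠ b → a ≠ c → a ≠ d → b ≠ c → b ≠ d → c ≠ d →
    gadgetCover.Adj a b ∨ gadgetCover.Adj a c ∨ gadgetCover.Adj a d ∨
      gadgetCover.Adj b c ∨ gadgetCover.Adj b d ∨ gadgetCover.Adj c d := by
  decide

theorem card_le_three_of_isIndepFinset_gadgetCover {T : Finset (Fin 5 × Fin 2)}
    (hT : IsIndepFinset gadgetCover T) : #T ≤ 3 := by
  by_contra! h
  obtain ⟨t, ht, ht4⟩ := exists_subset_card_eq (show 4 ≤ #T from h)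
  obtain ⟨a, b, c, d, hab, hac, had, hbc, hbd, hcd, rfl⟩ := card_eq_four.1 ht4
  have hindep : IsIndepFinset gadgetCover {a, b, c, d} := fun x hx y hy => hT x (ht hx) y (ht hy)
  rcases gadgetCover_adj_of_four a b c d hab hac had hbc hbd hcd with h | h | h | h | h | h <;>
    exact hindep _ (by simp) _ (by simp) h

theorem card_le_of_isIndepFinset_chainCover {S : Finset ((Fin n × Fin 5) × Fin 2)}
    (hS : IsIndepFinset (chainCover n) S) : #S ≤ 3 * n := by
  classical
  have hfibre : ∀ i : Fin n, #(S.filter (·.1.1 = i)) ≤ 3 := fun i => by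
    have hinj : Set.InjOn (fun w : (Fin n × Fin 5) × Fin 2 => (w.1.2, w.2))
        ↑(S.filter (·.1.1 = i)) := by
      rintro ⟨⟨i₁, j₁⟩, c₁⟩ h₁ ⟨⟨i₂, j₂⟩, c₂⟩ h₂ heq
      simp only [coe_filter, Set.mem_ofPred_eq, Prod.mk.injEq] at h₁ h₂ heq
      simp [h₁.2, h₂.2, heq]
    rw [← card_image_of_injOn hinj]
    refine card_le_three_of_isIndepFinset_gadgetCover ?_
    simp only [IsIndepFinset, mem_image, mem_filter]
    rintro _ ⟨⟨⟨i₁, j₁⟩, c₁⟩, ⟨h₁, hi₁⟩, rfl⟩ _ ⟨⟨⟨i₂, j₂⟩, c₂⟩, ⟨h₂, hi₂⟩, rfl⟩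
    dsimp only at hi₁ hi₂ ⊢
    subst hi₁ hi₂
    rw [← chainCover_adj_mk_mk]
    exact hS _ h₁ _ h₂
  calc #S = ∑ i, #(S.filter (·.1.1 = i)) := card_eq_sum_card_fiberwise fun _ _ => mem_univ _
    _ ≤ ∑ _i : Fin n, 3 := sum_le_sum fun i _ => hfibre i
    _ = 3 * n := by simp [mul_comm]

theorem alphaDP_two_chainGadgetGraph (n : ℕ) : alphaDP (chainGadgetGraph n) 2 = 3 * n := by
  have hlower : ∀ {W : Type} [Fintype W] {H : SimpleGraph W} {L : Fin n × Fin 5 → Finset W},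
      DPCover (chainGadgetGraph n) H L → (∀ v, #(L v) = 2) → 3 * n ≤ _root_.indepNum H :=
    fun hc hL => by
      obtain ⟨S, hS, hcard⟩ := exists_isIndepFinset_card_eq_three_mul hc hL
      exact hcard ▸ hS.card_le_indepNum
  refine IsLeast.csInf_eq ⟨⟨_, inferInstance, chainCover n, _, dpCover_permCover,
    fun v => by simp, le_antisymm (indepNum_le_of_forall fun _ hS =>
      card_le_of_isIndepFinset_chainCover hS) (hlower dpCover_permCover fun v => by simp)⟩, ?_⟩
  rintro _ ⟨W, _, H, L, hc, hL, rfl⟩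
  exact hlower hc hL

end AlphaDP

/-- For every `n ≥ 1`, the graph `G*` on `5n` vertices satisfies `χ_DP(G*) = 3` and
`α₂^{DP}(G*) = 3n < 10n/3 = 2|V(G*)|/χ_DP(G*)`; in particular `G*` is not partially
DP-nice. -/
theorem chainGadgetGraph_not_partiallyDPNice (n : ℕ) (hn : 1 ≤ n) :
    chiDP (chainGadgetGraph n) = 3 ∧ alphaDP (chainGadgetGraph n) 2 = 3 * n ∧
      ¬ PartiallyDPNice (chainGadgetGraph n) := by
  have hchi := chiDP_chainGadgetGraph hn
  have halpha := alphaDP_two_chainGadgetGraph n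
  refine ⟨hchi, halpha, fun hnice => ?_⟩
  have h := hnice 2 one_le_two (by omega)
  rw [hchi, halpha, Fintype.card_prod, Fintype.card_fin, Fintype.card_fin] at h
  have hn' : (1 : ℚ) ≤ n := by exact_mod_cast hn
  push_cast at h
  linarith
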